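/- In a two-level hierarchical FSM where every level-2 state-changing operation emits exactly one corresponding level-1 operation call (Rule 2), and level-1 direct incoming operations to the sub-branch's entry state call the level-2 re-initiation operation, while indirect incoming operations (those triggered by level-2 emissions) do not (Rule 3), any single user-initiated operation triggers only finitely many operation calls (no infinite callback loop). -/

import Mathlib

/-! Rank the operations: a level-1 DIO has rank 2, a level-2 operation rank 1, anything else
rank 0. Both kinds of call strictly lower the rank (an emitted IIO is not a DIO), so a call
path visits at most three ranks. -/

theorem List.IsChain.length_le_of_map_lt {α : Type*} {R : α → α → Prop} {n : ℕ}
    (f : α → Fin (n + 1)) (hf : ∀ a b, R a b → f b < f a) {l : List α} (hl : l.IsChain R) :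
    l.length ≤ n + 1 := by
  have hchain : (l.map f).IsChain (· > ·) := (List.isChain_map f).mpr (hl.imp hf)
  have hnodup : (l.map f).Nodup := (List.isChain_iff_pairwise.mp hchain).nodup
  simpa using hnodup.length_le_card

/-- Call graph of a two-level hierarchical FSM. Vertices are operations with a
level (1 or 2) and kinds SCO / DIO / IIO. Every edge either goes from a level-2
SCO to a level-1 IIO (the emitted call of Rule 2), or from a level-1 DIO to a
level-2 SCO (the re-initiation call of Rule 3); level-1 IIOs have no outgoing
edges (DIO and IIO are disjoint). Then every path in the call graph has at most
3 vertices (hence any single user-initiated operation triggers only finitely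
many calls: no infinite callback loop). -/
theorem stmt5 (V : Type) (lvl : V → ℕ) (SCO DIO IIO : V → Prop)
    (E : V → V → Prop)
    (hE : ∀ u v, E u v →
      (lvl u = 2 ∧ SCO u ∧ lvl v = 1 ∧ IIO v) ∨
      (lvl u = 1 ∧ DIO u ∧ lvl v = 2 ∧ SCO v))
    (hdisj : ∀ v, ¬ (DIO v ∧ IIO v)) :
    ∀ l : List V, l.Chain' E → l.length ≤ 3 := by
  classical
  let rank : V → Fin 3 := fun v => if lvl v = 2 then 1 else if DIO v then 2 else 0
  have rank_lt : ∀ u v, E u v → rank v < rank u := by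
    intro u v huv
    rcases hE u v huv with ⟨hu, -, hv, hvI⟩ | ⟨hu, huD, hv, -⟩
    · have hvD : ¬ DIO v := fun hvD => hdisj v ⟨hvD, hvI⟩
      simp [rank, hu, hv, hvD]
    · simp [rank, hu, huD, hv]
  exact fun l hl => hl.length_le_of_map_lt rank rank_lt
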